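/- arXiv:2206.04677 — 2 statements merged into one kernel-verified Lean document; each statement's English description precedes it below -/
import Mathlib

section
/- Let L_p and L_b be differentiable functions on ℝⁿ that are σ_p- and σ_b-strongly convex respectively, let α ∈ (0,1), and define L_mix = α·L_p + (1−α)·L_b. If θ_mix minimizes L_mix and θ* minimizes L_b, then ‖θ_mix − θ*‖ ≤ α‖∇L_p(θ*)‖ / (α·σ_p + (1−α)·σ_b). -/
open scoped RealInnerProductSpace

lemma grad_zero_of_min {n : ℕ} (f : EuclideanSpace ℝ (Fin n) → ℝ)
    (g a : EuclideanSpace ℝ (Fin n)) (hf : HasGradientAt f g a)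
    (hmin : ∀ x, f a ≤ f x) : g = 0 := by
  have hloc : IsLocalMin f a := Filter.Eventually.of_forall hmin
  have := hloc.hasFDerivAt_eq_zero hf.hasFDerivAt
  have := congrArg (InnerProductSpace.toDual ℝ (EuclideanSpace ℝ (Fin n))).symm this
  simpa using this

/-- Poison slowdown lemma: distance between poisoned and benign minimizers. -/
theorem stmt_1 {n : ℕ}
    (Lp Lb : EuclideanSpace ℝ (Fin n) → ℝ)
    (Lp' Lb' : EuclideanSpace ℝ (Fin n) → EuclideanSpace ℝ (Fin n))
    (σp σb α : ℝ)
    (hLp' : ∀ x, HasGradientAt Lp (Lp' x) x)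
    (hLb' : ∀ x, HasGradientAt Lb (Lb' x) x)
    (hp : ∀ x y, ⟪Lp' x - Lp' y, x - y⟫ ≥ σp * ‖x - y‖ ^ 2)
    (hb : ∀ x y, ⟪Lb' x - Lb' y, x - y⟫ ≥ σb * ‖x - y‖ ^ 2)
    (hσp : 0 < σp) (hσb : 0 < σb)
    (hα : α ∈ Set.Ioo (0 : ℝ) 1)
    (θmix θstar : EuclideanSpace ℝ (Fin n))
    (hmix : ∀ θ, α * Lp θmix + (1 - α) * Lb θmix ≤ α * Lp θ + (1 - α) * Lb θ)
    (hstar : ∀ θ, Lb θstar ≤ Lb θ) :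
    ‖θmix - θstar‖ ≤ α * ‖Lp' θstar‖ / (α * σp + (1 - α) * σb) := by
  obtain ⟨hα0, hα1⟩ := hα
  have hα1' : 0 < 1 - α := by linarith
  set σ := α * σp + (1 - α) * σb with hσdef
  have hσ : 0 < σ := by positivity
  -- gradient of mixed loss
  have hmixgrad : ∀ x, HasGradientAt (fun θ => α * Lp θ + (1 - α) * Lb θ)
      (α • Lp' x + (1 - α) • Lb' x) x := by
    intro x
    rw [hasGradientAt_iff_hasFDerivAt]
    have h1 := ((hLp' x).hasFDerivAt.const_mul α).add ((hLb' x).hasFDerivAt.const_mul (1 - α))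
    refine h1.congr_fderiv ?_
    ext v
    simp [inner_add_left, inner_smul_left, real_inner_smul_left, mul_comm]
  -- gradient zero conditions
  have hg1 : α • Lp' θmix + (1 - α) • Lb' θmix = 0 :=
    grad_zero_of_min _ _ _ (hmixgrad θmix) hmix
  have hg2 : Lb' θstar = 0 := grad_zero_of_min _ _ _ (hLb' θstar) hstar
  set d := θmix - θstar with hd
  -- strong convexity of the mix
  have key : σ * ‖d‖ ^ 2 ≤ α * ‖Lp' θstar‖ * ‖d‖ := by
    have h1 := hp θmix θstar
    have h2 := hb θmix θstar
    have hcomb : ⟪(α • Lp' θmix + (1 - α) • Lb' θmix) - (α • Lp' θstar + (1 - α) • Lb' θstar), d⟫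
        ≥ σ * ‖d‖ ^ 2 := by
      have : (α • Lp' θmix + (1 - α) • Lb' θmix) - (α • Lp' θstar + (1 - α) • Lb' θstar)
          = α • (Lp' θmix - Lp' θstar) + (1 - α) • (Lb' θmix - Lb' θstar) := by
        module
      rw [this, inner_add_left, real_inner_smul_left, real_inner_smul_left, hσdef]
      have := mul_le_mul_of_nonneg_left h1 hα0.le
      have := mul_le_mul_of_nonneg_left h2 hα1'.le
      nlinarith
    rw [hg1, hg2, smul_zero, add_zero, zero_sub, inner_neg_left, ge_iff_le,
      le_neg] at hcomb
    have hcs : ⟪α • Lp' θstar, d⟫ ≥ -(‖α • Lp' θstar‖ * ‖d‖) := by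
      have := abs_real_inner_le_norm (α • Lp' θstar) d
      have := neg_abs_le ⟪α • Lp' θstar, d⟫
      linarith [abs_real_inner_le_norm (α • Lp' θstar) d,
        neg_abs_le ⟪α • Lp' θstar, d⟫]
    have hnorm : ‖α • Lp' θstar‖ = α * ‖Lp' θstar‖ := by
      rw [norm_smul, Real.norm_eq_abs, abs_of_pos hα0]
    rw [hnorm] at hcs
    linarith
  rcases eq_or_ne d 0 with h0 | h0
  · rw [h0, norm_zero]
    positivity
  · have hdpos : 0 < ‖d‖ := norm_pos_iff.mpr h0
    rw [le_div_iff₀ hσ]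
    nlinarith
end

section
/- Let f be σ-strongly convex and differentiable with minimizer θ*, and let g be differentiable. If θ_m minimizes α·g + (1−α)·f for some α ∈ (0,1) and θ_m ≠ θ*, then the inner product ∇g(θ*)ᵀ(θ* − θ_m) ≥ ((α·σ_g + (1−α)·σ_f)/α)·‖θ* − θ_m‖², where g is additionally σ_g-strongly convex. -/
open scoped RealInnerProductSpace

/-- Key inner-product inequality at the two minimizers. -/
theorem stmt_2 {n : ℕ}
    (f g : EuclideanSpace ℝ (Fin n) → ℝ)
    (f' g' : EuclideanSpace ℝ (Fin n) → EuclideanSpace ℝ (Fin n))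
    (σf σg α : ℝ)
    (hf' : ∀ x, HasGradientAt f (f' x) x)
    (hg' : ∀ x, HasGradientAt g (g' x) x)
    (hf : ∀ x y, ⟪f' x - f' y, x - y⟫ ≥ σf * ‖x - y‖ ^ 2)
    (hg : ∀ x y, ⟪g' x - g' y, x - y⟫ ≥ σg * ‖x - y‖ ^ 2)
    (hα : α ∈ Set.Ioo (0 : ℝ) 1)
    (θm θstar : EuclideanSpace ℝ (Fin n))
    (hθm : ∀ θ, α * g θm + (1 - α) * f θm ≤ α * g θ + (1 - α) * f θ)
    (hθstar : ∀ θ, f θstar ≤ f θ)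
    (hne : θm ≠ θstar) :
    ⟪g' θstar, θstar - θm⟫
      ≥ ((α * σg + (1 - α) * σf) / α) * ‖θstar - θm‖ ^ 2 := by
  obtain ⟨hα0, hα1⟩ := hα
  set v := θstar - θm with hv
  -- f' θstar = 0
  have hfd : HasFDerivAt f (InnerProductSpace.toDual ℝ _ (f' θstar)) θstar :=
    (hf' θstar).hasFDerivAt
  have hmin : IsLocalMin f θstar := Filter.Eventually.of_forall hθstar
  have hf0 : InnerProductSpace.toDual ℝ _ (f' θstar) = 0 :=
    hmin.hasFDerivAt_eq_zero hfd
  have hf0' : ∀ w, ⟪f' θstar, w⟫ = 0 := by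
    intro w
    have := congrFun (congrArg DFunLike.coe hf0) w
    simpa using this
  -- mixture gradient zero at θm
  have hhd : HasFDerivAt (fun θ => α * g θ + (1 - α) * f θ)
      (α • (InnerProductSpace.toDual ℝ _ (g' θm)) +
        (1 - α) • (InnerProductSpace.toDual ℝ _ (f' θm))) θm := by
    exact ((hg' θm).hasFDerivAt.const_smul α).add ((hf' θm).hasFDerivAt.const_smul (1 - α))
  have hminm : IsLocalMin (fun θ => α * g θ + (1 - α) * f θ) θm :=
    Filter.Eventually.of_forall hθm
  have hm0 := hminm.hasFDerivAt_eq_zero hhd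
  have hm0' : α * ⟪g' θm, v⟫ + (1 - α) * ⟪f' θm, v⟫ = 0 := by
    have := congrFun (congrArg DFunLike.coe hm0) v
    simpa [InnerProductSpace.toDual_apply_apply, real_inner_comm, smul_eq_mul] using this
  -- strong convexity of mixture
  have h1 := hf θstar θm
  have h2 := hg θstar θm
  have key : α * ⟪g' θstar, v⟫ ≥ (α * σg + (1 - α) * σf) * ‖v‖ ^ 2 := by
    have e1 : ⟪f' θstar - f' θm, v⟫ = ⟪f' θstar, v⟫ - ⟪f' θm, v⟫ := inner_sub_left _ _ _
    have e2 : ⟪g' θstar - g' θm, v⟫ = ⟪g' θstar, v⟫ - ⟪g' θm, v⟫ := inner_sub_left _ _ _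
    rw [e1, hf0'] at h1
    rw [e2] at h2
    nlinarith [h1, h2, hm0', hα0.le, sub_pos.mpr hα1]
  rw [ge_iff_le, div_mul_eq_mul_div, div_le_iff₀ hα0]
  linarith [key]
end
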